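/- If a flow of isometries of a torus ℂ/Γ is conjugate (by a conformal map) to the translation flow z ↦ z + it, and the flow has no periodic points, then every orbit is dense; consequently the Gaussian curvature K, being continuous and constant along each orbit (since each time-t map is an isometry), is constant on the torus, so the torus is flat. -/

import Mathlib

/-!
No nonzero vertical vector lies in `Γ`, since the flow would then return to its starting point;
so `re` is injective on `Γ`. A cyclic `re '' Γ` would then give an integer relation between
`π₁` and `π₂`, which are linearly independent over `ℝ`; hence `re '' Γ` is dense, and so is
`iℝ + Γ = re⁻¹' (re '' Γ)` in `ℂ`. Each orbit is a translate of the image of `iℝ` in `ℂ ⧸ Γ`,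
hence dense, and a continuous function constant along a dense orbit is constant.
-/

open Complex Set Pointwise

theorem eq_zero_of_ofReal_mul_eq_ofReal_mul {z w : ℂ} (h : 0 < (z / w).im) {a b : ℝ}
    (hab : (a : ℂ) * z = b * w) : a = 0 ∧ b = 0 := by
  have hw : w ≠ 0 := by rintro rfl; simp at h
  by_cases ha : a = 0
  · subst ha
    have : (b : ℂ) * w = 0 := by simpa using hab.symm
    exact ⟨rfl, by exact_mod_cast (mul_eq_zero.mp this).resolve_right hw⟩
  · have hz : z / w = ((b / a : ℝ) : ℂ) := by
      rw [ofReal_div, div_eq_div_iff hw (ofReal_ne_zero.2 ha)]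
      linear_combination hab
    rw [hz, ofReal_im] at h
    exact absurd h (lt_irrefl 0)

theorem dense_map_re_of_forall_ofReal_mul_I_mem {Γ : AddSubgroup ℂ} {z w : ℂ}
    (hz : z ∈ Γ) (hw : w ∈ Γ) (h : 0 < (z / w).im)
    (hvert : ∀ t : ℝ, (t : ℂ) * I ∈ Γ → t = 0) :
    Dense (Γ.map reAddGroupHom : Set ℝ) := by
  have hre : ∀ γ ∈ Γ, γ.re = 0 → γ = 0 := fun γ hγ h0 => by
    have hγ' : γ = (γ.im : ℂ) * I := Complex.ext (by simp [h0]) (by simp)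
    rw [hγ', hvert γ.im (hγ' ▸ hγ), ofReal_zero, zero_mul]
  rcases (Γ.map reAddGroupHom).dense_or_cyclic with hd | ⟨r, hr⟩
  · exact hd
  have hmul : ∀ γ ∈ Γ, ∃ m : ℤ, (m : ℝ) * r = γ.re := fun γ hγ => by
    have : γ.re ∈ Γ.map reAddGroupHom := ⟨γ, hγ, rfl⟩
    simpa [hr, AddSubgroup.mem_closure_singleton, zsmul_eq_mul] using this
  obtain ⟨m, hm⟩ := hmul z hz
  obtain ⟨n, hn⟩ := hmul w hw
  have hrel : (n : ℂ) * z - (m : ℂ) * w = 0 := by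
    refine hre _ (sub_mem (by simpa using zsmul_mem hz n) (by simpa using zsmul_mem hw m)) ?_
    simp only [sub_re, mul_re, intCast_re, intCast_im, zero_mul, sub_zero, ← hm, ← hn]
    ring
  obtain ⟨-, hm0⟩ := eq_zero_of_ofReal_mul_eq_ofReal_mul h (a := n) (b := m)
    (by exact_mod_cast sub_eq_zero.mp hrel)
  have hz0 : z = 0 := hre z hz (by rw [← hm]; simp [show (m : ℝ) = 0 from hm0])
  simp [hz0] at h

theorem range_ofReal_mul_I_add_eq_preimage_re (Γ : AddSubgroup ℂ) :
    range (fun t : ℝ => (t : ℂ) * I) + (Γ : Set ℂ) = re ⁻¹' (Γ.map reAddGroupHom) := by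
  ext z
  constructor
  · rintro ⟨_, ⟨t, rfl⟩, γ, hγ, rfl⟩
    exact ⟨γ, hγ, by simp⟩
  · rintro ⟨γ, hγ, hre⟩
    refine ⟨_, ⟨z.im - γ.im, rfl⟩, γ, hγ, Complex.ext ?_ ?_⟩
    · simpa using hre
    · simp

theorem denseRange_mk_ofReal_mul_I {Γ : AddSubgroup ℂ}
    (h : Dense (Γ.map reAddGroupHom : Set ℝ)) :
    DenseRange fun t : ℝ => (QuotientAddGroup.mk ((t : ℂ) * I) : ℂ ⧸ Γ) := by
  rw [DenseRange, range_comp' QuotientAddGroup.mk, QuotientAddGroup.dense_image_mk,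
    range_ofReal_mul_I_add_eq_preimage_re]
  exact h.preimage isOpenMap_re

theorem denseRange_of_conj_add {M G T : Type*} [TopologicalSpace M] [TopologicalSpace G]
    [AddGroup G] [ContinuousAdd G] (e : M ≃ₜ G) {φ : T → M → M} {f : T → G}
    (hconj : ∀ t x, e (φ t x) = e x + f t) (hf : DenseRange f) (x : M) :
    DenseRange fun t => φ t x := by
  have hφ : (fun t => φ t x) = e.symm ∘ (e x + ·) ∘ f := by
    funext t
    simp [← hconj]
  rw [hφ]
  exact e.symm.surjective.denseRange.comp
    ((add_left_surjective (e x)).denseRange.comp hf (continuous_const_add _))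
    e.symm.continuous

/-- a flow of isometries of a torus `ℂ/Γ` conjugate (by a homeomorphism,
in the paper a conformal map) to the translation flow `z ↦ z + it` and having no
periodic points has every orbit dense; consequently the Gaussian curvature `K`,
continuous and invariant along the flow (each time-`t` map being an isometry), is
constant, so the torus is flat. -/
theorem aperiodic_translation_flow_dense_orbits_and_constant_curvature
    (π₁ π₂ : ℂ) (hlat : 0 < (π₁ / π₂).im)
    (Γ : AddSubgroup ℂ) (hΓ : Γ = AddSubgroup.closure {π₁, π₂})
    {M : Type*} [TopologicalSpace M]
    (e : M ≃ₜ (ℂ ⧸ Γ))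
    (φ : ℝ → M → M)
    (hconj : ∀ (t : ℝ) (x : M),
      e (φ t x) = e x + QuotientAddGroup.mk ((t : ℂ) * Complex.I))
    (haper : ∀ (x : M) (t : ℝ), t ≠ 0 → φ t x ≠ x)
    (K : M → ℝ) (hKcont : Continuous K)
    (hKinv : ∀ (t : ℝ) (x : M), K (φ t x) = K x) :
    (∀ x : M, Dense (Set.range fun t : ℝ => φ t x)) ∧ ∀ x y : M, K x = K y := by
  have hvert : ∀ t : ℝ, (t : ℂ) * I ∈ Γ → t = 0 := fun t ht => by
    by_contra ht0
    refine haper (e.symm 0) t ht0 (e.injective ?_)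
    rw [hconj, (QuotientAddGroup.eq_zero_iff _).2 ht, add_zero]
  have hπ₁ : π₁ ∈ Γ := hΓ ▸ AddSubgroup.subset_closure (by simp)
  have hπ₂ : π₂ ∈ Γ := hΓ ▸ AddSubgroup.subset_closure (by simp)
  have horbit : ∀ x, DenseRange fun t => φ t x :=
    denseRange_of_conj_add e hconj <| denseRange_mk_ofReal_mul_I <|
      dense_map_re_of_forall_ofReal_mul_I_mem hπ₁ hπ₂ hlat hvert
  exact ⟨horbit, fun x y =>
    congrFun ((horbit x).equalizer hKcont continuous_const (funext (hKinv · x))) y |>.symm⟩
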